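/- Let γ, τ ∈ SL(2,ℝ), and set c = (sgn c_γ, sgn c_τ, sgn c_{γτ}) where c_M denotes the bottom-left entry of M. Then ω(γ,τ) = 1 if c ∈ {(1,1,−1), (0,1,−1), (1,0,−1)}, or if c = (0,0,0) and d_γ < 0 and d_τ < 0 (d_M the bottom-right entry); ω(γ,τ) = −1 if c ∈ {(−1,−1,1), (−1,−1,0)}; and ω(γ,τ) = 0 otherwise. -/

import Mathlib

/-- The automorphy factor `j(M, z) = c z + d` for `M = (a, b; c, d)`. -/
noncomputable def jfac (M : Matrix (Fin 2) (Fin 2) ℝ) (z : ℂ) : ℂ :=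
  (M 1 0 : ℂ) * z + (M 1 1 : ℂ)

/-- The Möbius action of `M = (a, b; c, d)` on `z`: `(a z + b) / (c z + d)`. -/
noncomputable def moebius (M : Matrix (Fin 2) (Fin 2) ℝ) (z : ℂ) : ℂ :=
  ((M 0 0 : ℂ) * z + (M 0 1 : ℂ)) / ((M 1 0 : ℂ) * z + (M 1 1 : ℂ))

/-- The phase factor
`ω(M,N) = (−log j(MN,z) + log j(M, Nz) + log j(N,z)) / (2πi)`,
using the principal branch of the complex logarithm. -/
noncomputable def phaseFactor (M N : Matrix (Fin 2) (Fin 2) ℝ) (z : ℂ) : ℂ :=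
  (-Complex.log (jfac (M * N) z) + Complex.log (jfac M (moebius N z))
    + Complex.log (jfac N z)) / (2 * Real.pi * Complex.I)

open Complex

lemma jfac_im (M : Matrix (Fin 2) (Fin 2) ℝ) (w : ℂ) : (jfac M w).im = M 1 0 * w.im := by
  simp [jfac]

lemma jfac_re (M : Matrix (Fin 2) (Fin 2) ℝ) (w : ℂ) : (jfac M w).re = M 1 0 * w.re + M 1 1 := by
  simp [jfac]

lemma jfac_ne_zero {M : Matrix (Fin 2) (Fin 2) ℝ} (hM : M.det = 1) {w : ℂ} (hw : 0 < w.im) :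
    jfac M w ≠ 0 := by
  rw [Matrix.det_fin_two] at hM
  rcases eq_or_ne (M 1 0) 0 with h | h
  · have hd : M 1 1 ≠ 0 := by
      intro hd; rw [h, hd] at hM; simp at hM
    simp only [jfac, h, ofReal_zero, zero_mul, zero_add]
    exact_mod_cast hd
  · intro h0
    have him : (jfac M w).im ≠ 0 := by
      rw [jfac_im]; exact mul_ne_zero h hw.ne'
    rw [h0] at him; simp at him

lemma moebius_im_mul {τ : Matrix (Fin 2) (Fin 2) ℝ} (hτ : τ.det = 1) (z : ℂ)
    (hq : jfac τ z ≠ 0) :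
    (moebius τ z).im * Complex.normSq (jfac τ z) = z.im := by
  rw [Matrix.det_fin_two] at hτ
  have hN : Complex.normSq (jfac τ z) ≠ 0 := by
    simpa using hq
  rw [moebius, Complex.div_im]
  simp only [jfac] at hN ⊢
  rw [sub_mul, div_mul_cancel₀ _ hN, div_mul_cancel₀ _ hN]
  simp
  linear_combination z.im * hτ

lemma moebius_im_pos {τ : Matrix (Fin 2) (Fin 2) ℝ} (hτ : τ.det = 1) {z : ℂ}
    (hz : 0 < z.im) : 0 < (moebius τ z).im := by
  have hq := jfac_ne_zero hτ hz
  have hN : 0 < Complex.normSq (jfac τ z) := Complex.normSq_pos.2 hq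
  have h := moebius_im_mul hτ z hq
  nlinarith

lemma jfac_mul (γ τ : Matrix (Fin 2) (Fin 2) ℝ) (z : ℂ) (hq : jfac τ z ≠ 0) :
    jfac (γ * τ) z = jfac γ (moebius τ z) * jfac τ z := by
  have h10 : (γ * τ) 1 0 = γ 1 0 * τ 0 0 + γ 1 1 * τ 1 0 := by
    simp [Matrix.mul_apply, Fin.sum_univ_two]
  have h11 : (γ * τ) 1 1 = γ 1 0 * τ 0 1 + γ 1 1 * τ 1 1 := by
    simp [Matrix.mul_apply, Fin.sum_univ_two]
  simp only [jfac, moebius, h10, h11] at hq ⊢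
  rw [mul_div_assoc', div_add' _ _ _ hq, div_mul_cancel₀ _ hq]
  push_cast
  ring

lemma log_cocycle (a b : ℂ) (ha : a ≠ 0) (hb : b ≠ 0) :
    -Complex.log (a * b) + Complex.log a + Complex.log b
      = ((a.arg + b.arg - (a * b).arg : ℝ) : ℂ) * Complex.I := by
  apply Complex.ext
  · have h1 : ‖a‖ ≠ 0 := by simpa using ha
    have h2 : ‖b‖ ≠ 0 := by simpa using hb
    simp [Complex.log_re, map_mul, Real.log_mul h1 h2]
  · simp [Complex.log_im]
    ring

lemma arg_neg_pi_shift {a : ℂ} (h : 0 < a.arg) : (-a).arg = a.arg - Real.pi := by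
  apply Complex.arg_neg_eq_arg_sub_pi_iff.2
  rcases lt_trichotomy a.im 0 with him | him | him
  · exact absurd (Complex.arg_neg_iff.2 him) (by linarith)
  · right
    refine ⟨him, ?_⟩
    by_contra hre
    push_neg at hre
    have := Complex.arg_eq_zero_iff.2 ⟨hre, him⟩
    linarith
  · exact Or.inl him

lemma arg_mul_of_gt (a b : ℂ) (ha : a ≠ 0) (hb : b ≠ 0) (h : Real.pi < a.arg + b.arg) :
    (a * b).arg = a.arg + b.arg - 2 * Real.pi := by
  have hA : 0 < a.arg := by nlinarith [Complex.arg_le_pi b]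
  have hB : 0 < b.arg := by nlinarith [Complex.arg_le_pi a]
  have hna : (-a).arg = a.arg - Real.pi := arg_neg_pi_shift hA
  have hnb : (-b).arg = b.arg - Real.pi := arg_neg_pi_shift hB
  have hmem : (-a).arg + (-b).arg ∈ Set.Ioc (-Real.pi) Real.pi := by
    rw [hna, hnb]
    constructor
    · nlinarith [Real.pi_pos]
    · nlinarith [Complex.arg_le_pi a, Complex.arg_le_pi b, Real.pi_pos]
  have := Complex.arg_mul (neg_ne_zero.2 ha) (neg_ne_zero.2 hb) hmem
  rw [neg_mul_neg] at this
  rw [this, hna, hnb]; ring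

lemma arg_mul_of_le (a b : ℂ) (ha : a ≠ 0) (hb : b ≠ 0) (h : a.arg + b.arg ≤ -Real.pi) :
    (a * b).arg = a.arg + b.arg + 2 * Real.pi := by
  have hA : a.arg < 0 := by nlinarith [Complex.neg_pi_lt_arg b]
  have hB : b.arg < 0 := by nlinarith [Complex.neg_pi_lt_arg a]
  have hna : (-a).arg = a.arg + Real.pi :=
    Complex.arg_neg_eq_arg_add_pi_of_im_neg (Complex.arg_neg_iff.1 hA)
  have hnb : (-b).arg = b.arg + Real.pi :=
    Complex.arg_neg_eq_arg_add_pi_of_im_neg (Complex.arg_neg_iff.1 hB)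
  have hmem : (-a).arg + (-b).arg ∈ Set.Ioc (-Real.pi) Real.pi := by
    rw [hna, hnb]
    constructor
    · nlinarith [Complex.neg_pi_lt_arg a, Complex.neg_pi_lt_arg b, Real.pi_pos]
    · nlinarith
  have := Complex.arg_mul (neg_ne_zero.2 ha) (neg_ne_zero.2 hb) hmem
  rw [neg_mul_neg] at this
  rw [this, hna, hnb]; ring

lemma sign_eq_one_iff' {r : ℝ} : Real.sign r = 1 ↔ 0 < r := by
  constructor
  · intro h
    rcases lt_trichotomy r 0 with h' | h' | h'
    · rw [Real.sign_of_neg h'] at h; norm_num at h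
    · rw [h', Real.sign_zero] at h; norm_num at h
    · exact h'
  · exact Real.sign_of_pos

lemma sign_eq_neg_one_iff' {r : ℝ} : Real.sign r = -1 ↔ r < 0 := by
  constructor
  · intro h
    rcases lt_trichotomy r 0 with h' | h' | h'
    · exact h'
    · rw [h', Real.sign_zero] at h; norm_num at h
    · rw [Real.sign_of_pos h'] at h; norm_num at h
  · exact Real.sign_of_neg

lemma arg_pos_of_im_pos {x : ℂ} (h : 0 < x.im) : 0 < x.arg ∧ x.arg < Real.pi := by
  constructor
  · rcases (Complex.arg_nonneg_iff.2 h.le).lt_or_eq with h' | h'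
    · exact h'
    · exact absurd (Complex.arg_eq_zero_iff.1 h'.symm).2 h.ne'
  · rcases (Complex.arg_le_pi x).lt_or_eq with h' | h'
    · exact h'
    · exact absurd (Complex.arg_eq_pi_iff.1 h').2 h.ne'

lemma arg_jfac_eq_pi {M : Matrix (Fin 2) (Fin 2) ℝ} {w : ℂ}
    (hc : M 1 0 = 0) (hd : M 1 1 < 0) : (jfac M w).arg = Real.pi := by
  have h : jfac M w = ((M 1 1 : ℝ) : ℂ) := by rw [jfac, hc]; simp
  rw [h]
  exact Complex.arg_ofReal_of_neg hd

lemma phase_val (γ τ : Matrix (Fin 2) (Fin 2) ℝ) (hγ : γ.det = 1) (hτ : τ.det = 1)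
    (z : ℂ) (hz : 0 < z.im) :
    phaseFactor γ τ z =
      ((((jfac γ (moebius τ z)).arg + (jfac τ z).arg
          - (jfac γ (moebius τ z) * jfac τ z).arg) / (2 * Real.pi) : ℝ) : ℂ) := by
  have hwim := moebius_im_pos hτ hz
  have ha : jfac γ (moebius τ z) ≠ 0 := jfac_ne_zero hγ hwim
  have hb : jfac τ z ≠ 0 := jfac_ne_zero hτ hz
  unfold phaseFactor
  rw [jfac_mul γ τ z hb, log_cocycle _ _ ha hb]
  have hπ : (Real.pi : ℂ) ≠ 0 := Complex.ofReal_ne_zero.2 Real.pi_ne_zero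
  push_cast
  field_simp

set_option maxHeartbeats 2000000 in
/-- The case analysis of the phase factor `ω(γ,τ)` in terms of the signs of
the bottom-left entries of `γ`, `τ`, `γτ` (and, in the degenerate case, the
signs of the bottom-right entries). -/
theorem phaseFactor_cases (γ τ : Matrix (Fin 2) (Fin 2) ℝ)
    (hγ : γ.det = 1) (hτ : τ.det = 1) (z : ℂ) (hz : 0 < z.im) :
    (((Real.sign (γ 1 0), Real.sign (τ 1 0), Real.sign ((γ * τ) 1 0)) = (1, 1, -1) ∨
      (Real.sign (γ 1 0), Real.sign (τ 1 0), Real.sign ((γ * τ) 1 0)) = (0, 1, -1) ∨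
      (Real.sign (γ 1 0), Real.sign (τ 1 0), Real.sign ((γ * τ) 1 0)) = (1, 0, -1) ∨
      ((Real.sign (γ 1 0), Real.sign (τ 1 0), Real.sign ((γ * τ) 1 0)) = (0, 0, 0) ∧
        γ 1 1 < 0 ∧ τ 1 1 < 0)) →
      phaseFactor γ τ z = 1) ∧
    (((Real.sign (γ 1 0), Real.sign (τ 1 0), Real.sign ((γ * τ) 1 0)) = (-1, -1, 1) ∨
      (Real.sign (γ 1 0), Real.sign (τ 1 0), Real.sign ((γ * τ) 1 0)) = (-1, -1, 0)) →
      phaseFactor γ τ z = -1) ∧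
    ((¬ ((Real.sign (γ 1 0), Real.sign (τ 1 0), Real.sign ((γ * τ) 1 0)) = (1, 1, -1) ∨
        (Real.sign (γ 1 0), Real.sign (τ 1 0), Real.sign ((γ * τ) 1 0)) = (0, 1, -1) ∨
        (Real.sign (γ 1 0), Real.sign (τ 1 0), Real.sign ((γ * τ) 1 0)) = (1, 0, -1) ∨
        ((Real.sign (γ 1 0), Real.sign (τ 1 0), Real.sign ((γ * τ) 1 0)) = (0, 0, 0) ∧
          γ 1 1 < 0 ∧ τ 1 1 < 0)) ∧
      ¬ ((Real.sign (γ 1 0), Real.sign (τ 1 0), Real.sign ((γ * τ) 1 0)) = (-1, -1, 1) ∨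
        (Real.sign (γ 1 0), Real.sign (τ 1 0), Real.sign ((γ * τ) 1 0)) = (-1, -1, 0))) →
      phaseFactor γ τ z = 0) := by
  have hwim : 0 < (moebius τ z).im := moebius_im_pos hτ hz
  have ha : jfac γ (moebius τ z) ≠ 0 := jfac_ne_zero hγ hwim
  have hb : jfac τ z ≠ 0 := jfac_ne_zero hτ hz
  have hab : jfac (γ * τ) z = jfac γ (moebius τ z) * jfac τ z := jfac_mul γ τ z hb
  have hphase := phase_val γ τ hγ hτ z hz
  have haim : (jfac γ (moebius τ z)).im = γ 1 0 * (moebius τ z).im := jfac_im γ _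
  have hbim : (jfac τ z).im = τ 1 0 * z.im := jfac_im τ z
  have hcim : (jfac γ (moebius τ z) * jfac τ z).im = (γ * τ) 1 0 * z.im := by
    rw [← hab]; exact jfac_im _ z
  have hare : (jfac γ (moebius τ z)).re = γ 1 0 * (moebius τ z).re + γ 1 1 := jfac_re γ _
  have hbre : (jfac τ z).re = τ 1 0 * z.re + τ 1 1 := jfac_re τ z
  have hprod : (γ * τ) 1 0 = γ 1 0 * τ 0 0 + γ 1 1 * τ 1 0 := by
    simp [Matrix.mul_apply, Fin.sum_univ_two]
  have hdetτ : τ 0 0 * τ 1 1 - τ 0 1 * τ 1 0 = 1 := by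
    rw [← Matrix.det_fin_two]; exact hτ
  have hπ := Real.pi_pos
  have h2π : (2 : ℝ) * Real.pi ≠ 0 := by positivity
  refine ⟨?_, ?_, ?_⟩
  · -- value 1
    intro hca
    have hsum : Real.pi < (jfac γ (moebius τ z)).arg + (jfac τ z).arg := by
      rcases hca with h | h | h | ⟨h, hd1, hd2⟩ <;> simp only [Prod.mk.injEq] at h <;>
        obtain ⟨h1, h2, h3⟩ := h
      · have hc1 := sign_eq_one_iff'.1 h1
        have hc2 := sign_eq_one_iff'.1 h2
        have hc3 := sign_eq_neg_one_iff'.1 h3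
        have hA := arg_pos_of_im_pos (x := jfac γ (moebius τ z)) (by rw [haim]; positivity)
        have hB := arg_pos_of_im_pos (x := jfac τ z) (by rw [hbim]; positivity)
        have hC : (jfac γ (moebius τ z) * jfac τ z).arg < 0 :=
          Complex.arg_neg_iff.2 (by rw [hcim]; exact mul_neg_of_neg_of_pos hc3 hz)
        by_contra hle
        push_neg at hle
        have := Complex.arg_mul ha hb ⟨by linarith [hA.1, hB.1], hle⟩
        linarith [hA.1, hB.1]
      · have hc1 : γ 1 0 = 0 := Real.sign_eq_zero_iff.1 h1
        have hc2 := sign_eq_one_iff'.1 h2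
        have hc3 := sign_eq_neg_one_iff'.1 h3
        have hd1 : γ 1 1 < 0 := by
          rw [hprod, hc1] at hc3; nlinarith
        have hA : (jfac γ (moebius τ z)).arg = Real.pi := arg_jfac_eq_pi hc1 hd1
        have hB := arg_pos_of_im_pos (x := jfac τ z) (by rw [hbim]; positivity)
        linarith [hB.1]
      · have hc1 := sign_eq_one_iff'.1 h1
        have hc2 : τ 1 0 = 0 := Real.sign_eq_zero_iff.1 h2
        have hc3 := sign_eq_neg_one_iff'.1 h3
        have hd2 : τ 1 1 < 0 := by
          rw [hprod, hc2] at hc3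
          rw [hc2] at hdetτ
          nlinarith
        have hB : (jfac τ z).arg = Real.pi := arg_jfac_eq_pi hc2 hd2
        have hA := arg_pos_of_im_pos (x := jfac γ (moebius τ z)) (by rw [haim]; positivity)
        linarith [hA.1]
      · have hc1 : γ 1 0 = 0 := Real.sign_eq_zero_iff.1 h1
        have hc2 : τ 1 0 = 0 := Real.sign_eq_zero_iff.1 h2
        have hA : (jfac γ (moebius τ z)).arg = Real.pi := arg_jfac_eq_pi hc1 hd1
        have hB : (jfac τ z).arg = Real.pi := arg_jfac_eq_pi hc2 hd2
        linarith
    have hC := arg_mul_of_gt _ _ ha hb hsum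
    rw [hphase, hC]
    have heq : (jfac γ (moebius τ z)).arg + (jfac τ z).arg -
        ((jfac γ (moebius τ z)).arg + (jfac τ z).arg - 2 * Real.pi) = 2 * Real.pi := by ring
    rw [heq, div_self h2π]
    norm_num
  · -- value -1
    intro hcb
    have hsum : (jfac γ (moebius τ z)).arg + (jfac τ z).arg ≤ -Real.pi := by
      rcases hcb with h | h <;> simp only [Prod.mk.injEq] at h <;> obtain ⟨h1, h2, h3⟩ := h
      · have hc1 := sign_eq_neg_one_iff'.1 h1
        have hc2 := sign_eq_neg_one_iff'.1 h2
        have hc3 := sign_eq_one_iff'.1 h3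
        have hA : (jfac γ (moebius τ z)).arg < 0 :=
          Complex.arg_neg_iff.2 (by rw [haim]; exact mul_neg_of_neg_of_pos hc1 hwim)
        have hB : (jfac τ z).arg < 0 :=
          Complex.arg_neg_iff.2 (by rw [hbim]; exact mul_neg_of_neg_of_pos hc2 hz)
        have hC := arg_pos_of_im_pos (x := jfac γ (moebius τ z) * jfac τ z)
          (by rw [hcim]; positivity)
        by_contra hlt
        push_neg at hlt
        have := Complex.arg_mul ha hb ⟨hlt, by linarith⟩
        linarith [hC.1]
      · have hc1 := sign_eq_neg_one_iff'.1 h1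
        have hc2 := sign_eq_neg_one_iff'.1 h2
        have hc3 : (γ * τ) 1 0 = 0 := Real.sign_eq_zero_iff.1 h3
        have hA : (jfac γ (moebius τ z)).arg < 0 :=
          Complex.arg_neg_iff.2 (by rw [haim]; exact mul_neg_of_neg_of_pos hc1 hwim)
        have hB : (jfac τ z).arg < 0 :=
          Complex.arg_neg_iff.2 (by rw [hbim]; exact mul_neg_of_neg_of_pos hc2 hz)
        have hC : 0 ≤ (jfac γ (moebius τ z) * jfac τ z).arg :=
          Complex.arg_nonneg_iff.2 (by rw [hcim, hc3]; simp)
        by_contra hlt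
        push_neg at hlt
        have := Complex.arg_mul ha hb ⟨hlt, by linarith⟩
        linarith
    have hC := arg_mul_of_le _ _ ha hb hsum
    rw [hphase, hC]
    have heq : (jfac γ (moebius τ z)).arg + (jfac τ z).arg -
        ((jfac γ (moebius τ z)).arg + (jfac τ z).arg + 2 * Real.pi) = -(2 * Real.pi) := by ring
    rw [heq, neg_div, div_self h2π]
    norm_num
  · -- value 0
    rintro ⟨hn1, hn2⟩
    have hub : (jfac γ (moebius τ z)).arg + (jfac τ z).arg ≤ Real.pi := by
      by_contra hgt
      push_neg at hgt
      have hA : 0 < (jfac γ (moebius τ z)).arg := by nlinarith [Complex.arg_le_pi (jfac τ z)]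
      have hB : 0 < (jfac τ z).arg := by nlinarith [Complex.arg_le_pi (jfac γ (moebius τ z))]
      have haim0 : 0 ≤ (jfac γ (moebius τ z)).im := by
        by_contra h'
        push_neg at h'
        linarith [Complex.arg_neg_iff.2 h']
      have hbim0 : 0 ≤ (jfac τ z).im := by
        by_contra h'
        push_neg at h'
        linarith [Complex.arg_neg_iff.2 h']
      have hc1 : 0 ≤ γ 1 0 := by
        rw [haim] at haim0; nlinarith
      have hc2 : 0 ≤ τ 1 0 := by
        rw [hbim] at hbim0; nlinarith
      have hC := arg_mul_of_gt _ _ ha hb hgt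
      have hCle : (jfac γ (moebius τ z) * jfac τ z).arg ≤ 0 := by
        rw [hC]
        linarith [Complex.arg_le_pi (jfac γ (moebius τ z)), Complex.arg_le_pi (jfac τ z)]
      rcases hCle.lt_or_eq with hC0 | hC0
      · have him : (jfac γ (moebius τ z) * jfac τ z).im < 0 := by
          by_contra h'
          push_neg at h'
          linarith [Complex.arg_nonneg_iff.2 h']
        have hc3 : (γ * τ) 1 0 < 0 := by
          rw [hcim] at him; nlinarith
        rcases hc1.lt_or_eq with h1 | h1 <;> rcases hc2.lt_or_eq with h2 | h2
        · exact hn1 (Or.inl (by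
            rw [Real.sign_of_pos h1, Real.sign_of_pos h2, Real.sign_of_neg hc3]))
        · exact hn1 (Or.inr (Or.inr (Or.inl (by
            rw [Real.sign_of_pos h1, ← h2, Real.sign_zero, Real.sign_of_neg hc3]))))
        · exact hn1 (Or.inr (Or.inl (by
            rw [← h1, Real.sign_zero, Real.sign_of_pos h2, Real.sign_of_neg hc3])))
        · rw [hprod, ← h1, ← h2] at hc3
          simp at hc3
      · have hsum2 : (jfac γ (moebius τ z)).arg + (jfac τ z).arg = 2 * Real.pi := by
          rw [hC] at hC0; linarith
        have hA' : (jfac γ (moebius τ z)).arg = Real.pi := by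
          linarith [Complex.arg_le_pi (jfac γ (moebius τ z)), Complex.arg_le_pi (jfac τ z)]
        have hB' : (jfac τ z).arg = Real.pi := by
          linarith [Complex.arg_le_pi (jfac γ (moebius τ z))]
        obtain ⟨hreA, himA⟩ := Complex.arg_eq_pi_iff.1 hA'
        obtain ⟨hreB, himB⟩ := Complex.arg_eq_pi_iff.1 hB'
        have hc10 : γ 1 0 = 0 := by
          rw [haim] at himA
          rcases mul_eq_zero.1 himA with h' | h'
          · exact h'
          · exact absurd h' hwim.ne'
        have hc20 : τ 1 0 = 0 := by
          rw [hbim] at himB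
          rcases mul_eq_zero.1 himB with h' | h'
          · exact h'
          · exact absurd h' hz.ne'
        have hd1 : γ 1 1 < 0 := by
          rw [hare, hc10] at hreA; linarith
        have hd2 : τ 1 1 < 0 := by
          rw [hbre, hc20] at hreB; linarith
        have hc30 : (γ * τ) 1 0 = 0 := by rw [hprod, hc10, hc20]; ring
        exact hn1 (Or.inr (Or.inr (Or.inr ⟨by
          rw [hc10, hc20, hc30, Real.sign_zero], hd1, hd2⟩)))
    have hlb : -Real.pi < (jfac γ (moebius τ z)).arg + (jfac τ z).arg := by
      by_contra hle
      push_neg at hle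
      have hA : (jfac γ (moebius τ z)).arg < 0 := by
        nlinarith [Complex.neg_pi_lt_arg (jfac τ z)]
      have hB : (jfac τ z).arg < 0 := by
        nlinarith [Complex.neg_pi_lt_arg (jfac γ (moebius τ z))]
      have hima : (jfac γ (moebius τ z)).im < 0 := Complex.arg_neg_iff.1 hA
      have himb : (jfac τ z).im < 0 := Complex.arg_neg_iff.1 hB
      have hc1 : γ 1 0 < 0 := by rw [haim] at hima; nlinarith
      have hc2 : τ 1 0 < 0 := by rw [hbim] at himb; nlinarith
      have hC := arg_mul_of_le _ _ ha hb hle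
      have hC0 : 0 < (jfac γ (moebius τ z) * jfac τ z).arg := by
        rw [hC]
        nlinarith [Complex.neg_pi_lt_arg (jfac γ (moebius τ z)),
          Complex.neg_pi_lt_arg (jfac τ z)]
      have him : 0 ≤ (jfac γ (moebius τ z) * jfac τ z).im := by
        by_contra h'
        push_neg at h'
        linarith [Complex.arg_neg_iff.2 h']
      have hc3 : 0 ≤ (γ * τ) 1 0 := by rw [hcim] at him; nlinarith
      rcases hc3.lt_or_eq with h3 | h3
      · exact hn2 (Or.inl (by
          rw [Real.sign_of_neg hc1, Real.sign_of_neg hc2, Real.sign_of_pos h3]))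
      · exact hn2 (Or.inr (by
          rw [Real.sign_of_neg hc1, Real.sign_of_neg hc2, ← h3, Real.sign_zero]))
    have hC := Complex.arg_mul ha hb ⟨hlb, hub⟩
    rw [hphase, hC]
    simp
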